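/- Let E be a finite-dimensional real inner product space, d ≥ 1 an integer, g : E → ℝ convex and continuously differentiable, h : E → ℝ convex, λ > 0, x ∈ E and 0 ≤ σ̂ ≤ 1. Suppose ȳ ∈ E and w ∈ E satisfy w − ∇g(ȳ) ∈ ∂h(ȳ) and λw + ȳ − x = 0 (i.e., ȳ is the exact proximal point of g + h at x with stepsize λ). If (y, u, ε) ∈ E × E × [0,∞) satisfies u − ∇g(y) ∈ ∂_ε h(y) and ‖λu + y − x‖² + 2λε ≤ σ̂²‖y − x‖², then λ·(1 − σ̂)^{d−1}·‖y − x‖^{d−1} ≤ λ·‖ȳ − x‖^{d−1} ≤ λ·(1 + σ̂)^{d−1}·‖y − x‖^{d−1}. -/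

import Mathlib

open scoped RealInnerProductSpace BigOperators

/-- The subdifferential of a convex function `h` at `z`. -/
def subdiff {E : Type*} [NormedAddCommGroup E] [InnerProductSpace ℝ E]
    (h : E → ℝ) (z : E) : Set E :=
  {v | ∀ y : E, h z + ⟪v, y - z⟫ ≤ h y}

/-- The ε-subdifferential of a convex function `h` at `z`. -/
def epsSubdiff {E : Type*} [NormedAddCommGroup E] [InnerProductSpace ℝ E]
    (h : E → ℝ) (ε : ℝ) (z : E) : Set E :=
  {v | ∀ y : E, h z + ⟪v, y - z⟫ - ε ≤ h y}

/-!
The exact optimality condition says `w ∈ ∂(g + h)(ȳ)` and the approximate one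
`u ∈ ∂_ε(g + h)(y)`, so monotonicity of the ε-subdifferential gives `⟪w - u, y - ȳ⟫ ≤ ε`.
Since `λ(w - u) = (y - ȳ) - r` with `r = λu + y - x`, this reads
`‖y - ȳ‖² ≤ ⟪r, y - ȳ⟫ + λε ≤ ½‖r‖² + ½‖y - ȳ‖² + λε`, hence
`‖y - ȳ‖² ≤ ‖r‖² + 2λε ≤ σ̂²‖y - x‖²`. The triangle inequality then puts `‖ȳ - x‖`
between `(1 - σ̂)‖y - x‖` and `(1 + σ̂)‖y - x‖`.
-/

theorem ConvexOn.add_fderiv_sub_le {F : Type*} [NormedAddCommGroup F] [NormedSpace ℝ F]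
    {g : F → ℝ} (hg : ConvexOn ℝ Set.univ g) {z : F} (hgz : DifferentiableAt ℝ g z) (p : F) :
    g z + fderiv ℝ g z (p - z) ≤ g p := by
  let φ : ℝ → ℝ := g ∘ AffineMap.lineMap z p
  have hφ : ConvexOn ℝ Set.univ φ := by
    simpa using hg.comp_affineMap (AffineMap.lineMap z p)
  have hφ' : HasDerivAt φ (fderiv ℝ g z (p - z)) 0 := by
    refine HasFDerivAt.comp_hasDerivAt (0 : ℝ) ?_ AffineMap.hasDerivAt_lineMap
    simpa using hgz.hasFDerivAt
  have hslope := hφ.le_slope_of_hasDerivAt (Set.mem_univ 0) (Set.mem_univ 1) one_pos hφ'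
  simp only [slope_def_field, φ, Function.comp_apply, AffineMap.lineMap_apply_zero,
    AffineMap.lineMap_apply_one, sub_zero, div_one] at hslope
  linarith

section Subdifferential

variable {E : Type*} [NormedAddCommGroup E] [InnerProductSpace ℝ E]

theorem subdiff_eq_epsSubdiff_zero (h : E → ℝ) (z : E) : subdiff h z = epsSubdiff h 0 z := by
  simp only [subdiff, epsSubdiff, sub_zero]

theorem add_gradient_mem_epsSubdiff_add [CompleteSpace E] {g h : E → ℝ}
    (hg : ConvexOn ℝ Set.univ g) {z : E} (hgz : DifferentiableAt ℝ g z) {ε : ℝ} {v : E}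
    (hv : v ∈ epsSubdiff h ε z) : v + gradient g z ∈ epsSubdiff (g + h) ε z := by
  intro p
  have hgp := hg.add_fderiv_sub_le hgz p
  rw [← inner_gradient_left] at hgp
  have hhp := hv p
  simp only [Pi.add_apply, inner_add_left]
  linarith

theorem inner_sub_sub_le_of_mem_epsSubdiff {φ : E → ℝ} {a b v v' : E} {ε ε' : ℝ}
    (hv : v ∈ epsSubdiff φ ε a) (hv' : v' ∈ epsSubdiff φ ε' b) :
    ⟪v - v', b - a⟫ ≤ ε + ε' := by
  have hab := hv b
  have hba := hv' a
  rw [← neg_sub b a, inner_neg_right] at hba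
  rw [inner_sub_left]
  linarith

end Subdifferential

theorem sq_norm_le_sq_norm_add_of_sq_norm_le_inner_add {E : Type*} [NormedAddCommGroup E]
    [InnerProductSpace ℝ E] {a r : E} {c : ℝ} (h : ‖a‖ ^ 2 ≤ ⟪r, a⟫ + c) :
    ‖a‖ ^ 2 ≤ ‖r‖ ^ 2 + 2 * c := by
  have hsq : 0 ≤ ‖a - r‖ ^ 2 := sq_nonneg _
  rw [norm_sub_sq_real, real_inner_comm] at hsq
  linarith

theorem norm_sub_le_of_approx_prox {E : Type*} [NormedAddCommGroup E] [InnerProductSpace ℝ E]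
    {φ : E → ℝ} {lam σ ε : ℝ} (hlam : 0 < lam) (hσ : 0 ≤ σ) {x ybar w y u : E}
    (hw : w ∈ epsSubdiff φ 0 ybar) (heq : lam • w + ybar - x = 0)
    (hu : u ∈ epsSubdiff φ ε y)
    (hineq : ‖lam • u + y - x‖ ^ 2 + 2 * lam * ε ≤ σ ^ 2 * ‖y - x‖ ^ 2) :
    ‖y - ybar‖ ≤ σ * ‖y - x‖ := by
  have hmono : ⟪w - u, y - ybar⟫ ≤ ε := by
    simpa using inner_sub_sub_le_of_mem_epsSubdiff hw hu
  have hlw : lam • (w - u) = (y - ybar) - (lam • u + y - x) := by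
    rw [smul_sub, ← sub_eq_zero, ← heq]
    abel
  have hquad : ‖y - ybar‖ ^ 2 ≤ ⟪lam • u + y - x, y - ybar⟫ + lam * ε := by
    have := mul_le_mul_of_nonneg_left hmono hlam.le
    rw [← real_inner_smul_left, hlw, inner_sub_left, real_inner_self_eq_norm_sq] at this
    linarith
  have hsq := sq_norm_le_sq_norm_add_of_sq_norm_le_inner_add hquad
  exact le_of_sq_le_sq (by rw [mul_pow]; linarith) (by positivity)

theorem pow_mem_Icc_of_abs_sub_le {a b σ : ℝ} (ha : 0 ≤ a) (hb : 0 ≤ b) (hσ : σ ≤ 1)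
    (hab : |a - b| ≤ σ * b) (n : ℕ) :
    a ^ n ∈ Set.Icc ((1 - σ) ^ n * b ^ n) ((1 + σ) ^ n * b ^ n) := by
  rw [abs_le] at hab
  rw [← mul_pow, ← mul_pow]
  exact ⟨pow_le_pow_left₀ (mul_nonneg (sub_nonneg.mpr hσ) hb) (by linarith) n,
    pow_le_pow_left₀ ha (by linarith) n⟩

theorem stmt6_general {E : Type*} [NormedAddCommGroup E] [InnerProductSpace ℝ E]
    [FiniteDimensional ℝ E]
    (d : ℕ)
    (g : E → ℝ) (hgconv : ConvexOn ℝ Set.univ g) (hg : ContDiff ℝ 1 g)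
    (h : E → ℝ)
    (lam : ℝ) (hlam : 0 < lam) (x : E) (σh : ℝ) (hσh0 : 0 ≤ σh) (hσh1 : σh ≤ 1)
    (ybar w : E)
    (hw : w - gradient g ybar ∈ subdiff h ybar)
    (heq : lam • w + ybar - x = 0)
    (y u : E) (ε : ℝ)
    (hu : u - gradient g y ∈ epsSubdiff h ε y)
    (hineq : ‖lam • u + y - x‖ ^ 2 + 2 * lam * ε ≤ σh ^ 2 * ‖y - x‖ ^ 2) :
    lam * (1 - σh) ^ (d - 1) * ‖y - x‖ ^ (d - 1) ≤ lam * ‖ybar - x‖ ^ (d - 1) ∧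
      lam * ‖ybar - x‖ ^ (d - 1) ≤ lam * (1 + σh) ^ (d - 1) * ‖y - x‖ ^ (d - 1) := by
  have hgd : Differentiable ℝ g := hg.differentiable one_ne_zero
  have hw' : w ∈ epsSubdiff (g + h) 0 ybar := by
    rw [subdiff_eq_epsSubdiff_zero] at hw
    simpa using add_gradient_mem_epsSubdiff_add hgconv (hgd ybar) hw
  have hu' : u ∈ epsSubdiff (g + h) ε y := by
    simpa using add_gradient_mem_epsSubdiff_add hgconv (hgd y) hu
  have hdist := norm_sub_le_of_approx_prox hlam hσh0 hw' heq hu' hineq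
  have hab : |‖ybar - x‖ - ‖y - x‖| ≤ σh * ‖y - x‖ :=
    (abs_norm_sub_norm_le _ _).trans (by simpa [norm_sub_rev] using hdist)
  obtain ⟨hlow, hupp⟩ :=
    pow_mem_Icc_of_abs_sub_le (norm_nonneg _) (norm_nonneg _) hσh1 hab (d - 1)
  rw [mul_assoc, mul_assoc]
  exact ⟨mul_le_mul_of_nonneg_left hlow hlam.le, mul_le_mul_of_nonneg_left hupp hlam.le⟩

theorem stmt6 {E : Type*} [NormedAddCommGroup E] [InnerProductSpace ℝ E]
    [FiniteDimensional ℝ E]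
    (d : ℕ) (hd : 1 ≤ d)
    (g : E → ℝ) (hgconv : ConvexOn ℝ Set.univ g) (hg : ContDiff ℝ 1 g)
    (h : E → ℝ) (hh : ConvexOn ℝ Set.univ h)
    (lam : ℝ) (hlam : 0 < lam) (x : E) (σh : ℝ) (hσh0 : 0 ≤ σh) (hσh1 : σh ≤ 1)
    (ybar w : E)
    (hw : w - gradient g ybar ∈ subdiff h ybar)
    (heq : lam • w + ybar - x = 0)
    (y u : E) (ε : ℝ) (hε : 0 ≤ ε)
    (hu : u - gradient g y ∈ epsSubdiff h ε y)
    (hineq : ‖lam • u + y - x‖ ^ 2 + 2 * lam * ε ≤ σh ^ 2 * ‖y - x‖ ^ 2) :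
    lam * (1 - σh) ^ (d - 1) * ‖y - x‖ ^ (d - 1) ≤ lam * ‖ybar - x‖ ^ (d - 1) ∧
      lam * ‖ybar - x‖ ^ (d - 1) ≤ lam * (1 + σh) ^ (d - 1) * ‖y - x‖ ^ (d - 1) :=
  stmt6_general d g hgconv hg h lam hlam x σh hσh0 hσh1 ybar w hw heq y u ε hu hineq
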